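/- Let {A_k}_{k=0}^∞ be complex-valued random variables on a common probability space, and let F_k denote the distribution function of |A_k|. Suppose Assumptions 1 and 2 hold: there exist a > 1 and a decreasing function f : [a,∞) → [0,1] with ∫_a^∞ f(x)/x dx < ∞ and 1 − F_k(x) ≤ f(x) for all x ∈ [a,∞) and all k ≥ 0; and there exist 0 < b < 1 and an increasing function g : [0,b] → [0,1] with ∫_0^b g(x)/x dx < ∞ and F_k(x) ≤ g(x) for all x ∈ [0,b] and all k ≥ 0. Then lim_{n→∞} max_{0≤k≤n} |A_k|^{1/n} = 1 almost surely. -/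

import Mathlib

/-!
Upper bound: for `c > 1` the window `[c^k, c^(k+1)]` has logarithmic length `log c`, and on it
`P(|A_(k+1)| > c^(k+1)) ≤ 1 - F_(k+1)(x) ≤ f(x)`, so `P(|A_(k+1)| > c^(k+1)) · log c` is at most the
integral of `f(x)/x` over the window. These windows tile `[c^m, ∞)`, so the probabilities are
summable and Borel–Cantelli gives `|A_k| ≤ c^k` eventually, hence `max_{k≤n} |A_k| ≤ C c^n`.

Lower bound: `P(A_0 = 0) ≤ g(x)` for every `x ∈ (0, b]`, which is compatible with
`∫_0^b g(x)/x dx < ∞` only if `P(A_0 = 0) = 0`. Then `max_{k≤n} |A_k| ≥ |A_0| > 0` and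
`|A_0|^(1/n) → 1`.
-/

open MeasureTheory Filter Set Real
open scoped Interval

lemma mul_log_div_le_integral_div {φ : ℝ → ℝ} {p q t : ℝ} (hp : 0 < p) (hpq : p ≤ q)
    (hφ : IntervalIntegrable (fun x => φ x / x) volume p q) (ht : ∀ x ∈ Icc p q, t ≤ φ x) :
    t * log (q / p) ≤ ∫ x in p..q, φ x / x := by
  have h0 : (0 : ℝ) ∉ [[p, q]] := by
    rw [uIcc_of_le hpq]
    exact fun h => hp.not_ge h.1
  have hinv : IntervalIntegrable (fun x => t * x⁻¹) volume p q :=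
    (intervalIntegrable_inv_iff.2 (Or.inr h0)).const_mul t
  calc t * log (q / p) = ∫ x in p..q, t * x⁻¹ := by
        rw [intervalIntegral.integral_const_mul, integral_inv h0]
    _ ≤ ∫ x in p..q, φ x / x := by
        refine intervalIntegral.integral_mono_on hpq hinv hφ fun x hx => ?_
        rw [div_eq_mul_inv]
        exact mul_le_mul_of_nonneg_right (ht x hx) (inv_nonneg.2 (hp.trans_le hx.1).le)

lemma summable_of_le_on_Icc_pow {φ : ℝ → ℝ} {u : ℕ → ℝ} {a c : ℝ} (ha : 0 < a) (hc : 1 < c)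
    (hφ : IntegrableOn (fun x => φ x / x) (Ici a)) (hφ0 : ∀ x ∈ Ici a, 0 ≤ φ x)
    (hu0 : ∀ k, 0 ≤ u k)
    (hu : ∀ k, a ≤ c ^ k → ∀ x ∈ Icc (c ^ k) (c ^ (k + 1)), u (k + 1) ≤ φ x) :
    Summable u := by
  obtain ⟨m, hm⟩ := pow_unbounded_of_one_lt a hc
  set e : ℕ → ℝ := fun k => c ^ (k + m)
  have hae : ∀ k, a ≤ e k := fun k =>
    hm.le.trans (pow_le_pow_right₀ hc.le (Nat.le_add_left m k))
  have he : ∀ k, e k ≤ e (k + 1) := fun k => pow_le_pow_right₀ hc.le (by omega)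
  have hint : ∀ {p q}, a ≤ p → p ≤ q → IntervalIntegrable (fun x => φ x / x) volume p q :=
    fun hap hpq => (intervalIntegrable_iff_integrableOn_Ioc_of_le hpq).2
      (hφ.mono_set fun x hx => hap.trans hx.1.le)
  have hwindow : ∀ k, u (k + (m + 1)) * log c ≤ ∫ x in e k..e (k + 1), φ x / x := by
    intro k
    have hek : e (k + 1) / e k = c := by
      simp only [e, add_right_comm k 1 m, pow_succ]
      field_simp
    rw [← hek]
    exact mul_log_div_le_integral_div (ha.trans_le (hae k)) (he k) (hint (hae k) (he k))
      (by simpa only [e, add_right_comm k 1 m, ← add_assoc] using hu (k + m) (hae k))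
  rw [← summable_nat_add_iff (m + 1)]
  refine summable_of_sum_range_le (fun k => hu0 _) (c := (∫ x in Ici a, φ x / x) / log c)
    fun n => ?_
  rw [le_div_iff₀ (log_pos hc), Finset.sum_mul]
  calc ∑ k ∈ Finset.range n, u (k + (m + 1)) * log c
      ≤ ∑ k ∈ Finset.range n, ∫ x in e k..e (k + 1), φ x / x :=
        Finset.sum_le_sum fun k _ => hwindow k
    _ = ∫ x in e 0..e n, φ x / x :=
        intervalIntegral.sum_integral_adjacent_intervals fun k _ => hint (hae k) (he k)
    _ ≤ ∫ x in Ici a, φ x / x := by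
        rw [intervalIntegral.integral_of_le ((monotone_nat_of_le_succ he) (Nat.zero_le n))]
        refine setIntegral_mono_set hφ ?_ (Eventually.of_forall fun x hx => (hae 0).trans hx.1.le)
        filter_upwards [ae_restrict_mem measurableSet_Ici] with x hx
        exact div_nonneg (hφ0 x hx) (ha.le.trans hx)

lemma nonpos_of_le_of_integrableOn_div {g : ℝ → ℝ} {b t : ℝ} (hb : 0 < b)
    (hg : IntegrableOn (fun x => g x / x) (Ioc 0 b)) (ht : ∀ x ∈ Ioc 0 b, t ≤ g x) : t ≤ 0 := by
  by_contra! ht0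
  have hdiv : IntegrableOn (fun x => t / x) (Ioc 0 b) := by
    refine hg.mono' (by fun_prop) ?_
    filter_upwards [ae_restrict_mem measurableSet_Ioc] with x hx
    rw [Real.norm_of_nonneg (div_nonneg ht0.le hx.1.le)]
    exact div_le_div_of_nonneg_right (ht x hx) hx.1.le
  have hinv : IntervalIntegrable (fun x => x⁻¹) volume 0 b := by
    refine (intervalIntegrable_iff_integrableOn_Ioc_of_le hb.le).2 ?_
    have := hdiv.const_mul t⁻¹
    simp only [div_eq_mul_inv, ← mul_assoc, inv_mul_cancel₀ ht0.ne', one_mul] at this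
    exact this
  -- `x⁻¹` is not integrable near `0`
  simp [hb.ne, hb.le] at hinv

section Probability

variable {Ω : Type*} [MeasurableSpace Ω] {μ : Measure Ω}

lemma ae_eventually_notMem_of_summable_measureReal [IsFiniteMeasure μ] {s : ℕ → Set Ω}
    (hs : Summable fun k => μ.real (s k)) : ∀ᵐ ω ∂μ, ∀ᶠ k in atTop, ω ∉ s k := by
  have hsum : ∑' k, μ (s k) = ENNReal.ofReal (∑' k, μ.real (s k)) := by
    rw [ENNReal.ofReal_tsum_of_nonneg (fun k => measureReal_nonneg) hs]
    exact tsum_congr fun k => (ofReal_measureReal).symm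
  exact ae_eventually_notMem (hsum ▸ ENNReal.ofReal_ne_top)

lemma ae_pos_of_measureReal_le_of_integrableOn_div [IsFiniteMeasure μ] {Y : Ω → ℝ} {g : ℝ → ℝ}
    {b : ℝ} (hb : 0 < b)
    (hg : IntegrableOn (fun x => g x / x) (Ioc 0 b))
    (hY : ∀ x ∈ Ioc 0 b, μ.real {ω | Y ω ≤ x} ≤ g x) : ∀ᵐ ω ∂μ, 0 < Y ω := by
  have hzero : μ.real {ω | Y ω ≤ 0} ≤ 0 := nonpos_of_le_of_integrableOn_div hb hg fun x hx =>
    (measureReal_mono fun ω (hω : Y ω ≤ 0) => hω.trans hx.1.le).trans (hY x hx)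
  rw [ae_iff]
  simpa [measureReal_eq_zero_iff] using le_antisymm hzero measureReal_nonneg

lemma ae_eventually_le_pow_of_tail_le [IsProbabilityMeasure μ] {Y : ℕ → Ω → ℝ}
    (hY : ∀ k, Measurable (Y k)) {f : ℝ → ℝ} {a c : ℝ} (ha : 0 < a) (hc : 1 < c)
    (hf : IntegrableOn (fun x => f x / x) (Ici a))
    (htail : ∀ k, ∀ x ∈ Ici a, 1 - μ.real {ω | Y k ω ≤ x} ≤ f x) :
    ∀ᵐ ω ∂μ, ∀ᶠ k in atTop, Y k ω ≤ c ^ k := by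
  have hsum : Summable fun k => μ.real {ω | c ^ k < Y k ω} := by
    refine summable_of_le_on_Icc_pow ha hc hf (fun x hx => ?_) (fun k => measureReal_nonneg)
      fun k hak x hx => ?_
    · exact (sub_nonneg.2 measureReal_le_one).trans (htail 0 x hx)
    · calc μ.real {ω | c ^ (k + 1) < Y (k + 1) ω} ≤ μ.real {ω | x < Y (k + 1) ω} :=
            measureReal_mono fun ω (hω : _ < _) => hx.2.trans_lt hω
        _ = 1 - μ.real {ω | Y (k + 1) ω ≤ x} := by
            rw [← probReal_compl_eq_one_sub (measurableSet_le (hY _) measurable_const)]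
            simp only [compl_ofPred, not_le]
        _ ≤ f x := htail (k + 1) x (hak.trans hx.1)
  filter_upwards [ae_eventually_notMem_of_summable_measureReal hsum] with ω hω
  exact hω.mono fun k hk => not_lt.1 hk

lemma ae_forall_eventually_le_pow {Y : ℕ → Ω → ℝ}
    (h : ∀ c > 1, ∀ᵐ ω ∂μ, ∀ᶠ k in atTop, Y k ω ≤ c ^ k) :
    ∀ᵐ ω ∂μ, ∀ c > 1, ∀ᶠ k in atTop, Y k ω ≤ c ^ k := by
  have hℚ : ∀ᵐ ω ∂μ, ∀ q : ℚ, 1 < (q : ℝ) → ∀ᶠ k in atTop, Y k ω ≤ (q : ℝ) ^ k :=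
    ae_all_iff.2 fun q => if hq : 1 < (q : ℝ) then (h q hq).mono fun _ hω _ => hω
      else .of_forall fun _ h => absurd h hq
  filter_upwards [hℚ] with ω hω c hc
  obtain ⟨q, hq1, hqc⟩ := exists_rat_btwn hc
  exact (hω q hq1).mono fun k hk =>
    hk.trans (pow_le_pow_left₀ (zero_le_one.trans hq1.le) hqc.le k)

end Probability

lemma tendsto_const_rpow_one_div_nat {C : ℝ} (hC : 0 < C) :
    Tendsto (fun n : ℕ => C ^ (1 / (n : ℝ))) atTop (nhds 1) := by
  simpa using tendsto_const_nhds.rpow tendsto_one_div_atTop_nhds_zero_nat (Or.inl hC.ne')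

lemma tendsto_rpow_one_div_of_le_of_le_mul_pow {s : ℕ → ℝ} {ε : ℝ} (hε : 0 < ε)
    (hs : ∀ n, ε ≤ s n) (h : ∀ c > 1, ∃ C > 0, ∀ n, s n ≤ C * c ^ n) :
    Tendsto (fun n : ℕ => s n ^ (1 / (n : ℝ))) atTop (nhds 1) := by
  refine tendsto_order.2 ⟨fun y hy => ?_, fun y hy => ?_⟩
  · filter_upwards [(tendsto_const_rpow_one_div_nat hε).eventually_const_lt hy] with n hn
    exact hn.trans_le (rpow_le_rpow hε.le (hs n) (by positivity))
  · obtain ⟨c, hc1, hcy⟩ := exists_between hy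
    obtain ⟨C, hC, hsC⟩ := h c hc1
    have hlim := ((tendsto_const_rpow_one_div_nat hC).mul_const c).eventually_lt_const
      (by simpa using hcy)
    filter_upwards [hlim, eventually_ne_atTop 0] with n hn hn0
    calc s n ^ (1 / (n : ℝ)) ≤ (C * c ^ n) ^ (1 / (n : ℝ)) :=
          rpow_le_rpow (hε.le.trans (hs n)) (hsC n) (by positivity)
      _ = C ^ (1 / (n : ℝ)) * c := by
          rw [mul_rpow hC.le (by positivity), one_div, pow_rpow_inv_natCast (by positivity) hn0]
      _ < y := hn

lemma exists_pos_forall_le_mul_pow {x : ℕ → ℝ} {c : ℝ} (hc : 1 ≤ c)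
    (h : ∀ᶠ k in atTop, x k ≤ c ^ k) : ∃ C > 0, ∀ k, x k ≤ C * c ^ k := by
  obtain ⟨B, hB⟩ : BddAbove (range fun k => x k / c ^ k) :=
    (isBoundedUnder_of_eventually_le (h.mono fun k hk =>
      div_le_one_of_le₀ hk (by positivity))).bddAbove_range
  refine ⟨max B 1, by positivity, fun k => ?_⟩
  rw [← div_le_iff₀ (by positivity)]
  exact (hB (mem_range_self k)).trans (le_max_left B 1)

lemma tendsto_sup'_rpow_one_div {x : ℕ → ℝ} (h0 : 0 < x 0)
    (h : ∀ c > 1, ∀ᶠ k in atTop, x k ≤ c ^ k) :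
    Tendsto (fun n : ℕ => ((Finset.range (n + 1)).sup' Finset.nonempty_range_add_one x) ^
      (1 / (n : ℝ))) atTop (nhds 1) := by
  refine tendsto_rpow_one_div_of_le_of_le_mul_pow h0
    (fun n => Finset.le_sup' x (Finset.mem_range.2 n.succ_pos)) fun c hc => ?_
  obtain ⟨C, hC, hxC⟩ := exists_pos_forall_le_mul_pow hc.le (h c hc)
  refine ⟨C, hC, fun n => Finset.sup'_le _ _ fun k hk => (hxC k).trans ?_⟩
  gcongr
  exacts [hc.le, Finset.mem_range_succ_iff.1 hk]

theorem tendsto_max_abs_rpow_one_general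
    {Ω : Type*} [MeasurableSpace Ω] (μ : Measure Ω) [IsProbabilityMeasure μ]
    (A : ℕ → Ω → ℂ) (hA : ∀ k, Measurable (A k))
    (a : ℝ) (ha : 1 < a) (f : ℝ → ℝ)
    (hf_int : IntegrableOn (fun x => f x / x) (Set.Ici a))
    (htail : ∀ k, ∀ x ∈ Set.Ici a,
      1 - (μ {ω | ‖A k ω‖ ≤ x}).toReal ≤ f x)
    (b : ℝ) (hb0 : 0 < b) (g : ℝ → ℝ)
    (hg_int : IntegrableOn (fun x => g x / x) (Set.Ioc 0 b))
    (hsmall : ∀ k, ∀ x ∈ Set.Icc 0 b,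
      (μ {ω | ‖A k ω‖ ≤ x}).toReal ≤ g x) :
    ∀ᵐ ω ∂μ,
      Tendsto
        (fun n : ℕ =>
          ((Finset.range (n + 1)).sup' Finset.nonempty_range_add_one
              fun k => ‖A k ω‖) ^ (1 / (n : ℝ)))
        atTop (nhds 1) := by
  have hupper : ∀ᵐ ω ∂μ, ∀ c > 1, ∀ᶠ k in atTop, ‖A k ω‖ ≤ c ^ k :=
    ae_forall_eventually_le_pow fun c hc =>
      ae_eventually_le_pow_of_tail_le (fun k => (hA k).norm) (zero_lt_one.trans ha) hc hf_int htail
  have hlower : ∀ᵐ ω ∂μ, 0 < ‖A 0 ω‖ :=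
    ae_pos_of_measureReal_le_of_integrableOn_div hb0 hg_int fun x hx =>
      hsmall 0 x (Ioc_subset_Icc_self hx)
  filter_upwards [hupper, hlower] with ω hU hL
  exact tendsto_sup'_rpow_one_div hL hU

/-- Lemma 4.2, limit (4.6). For a sequence of complex random coefficients
`A_k` whose distribution functions `F_k(x) = μ {|A_k| ≤ x}` satisfy Assumption 1
(`1 - F_k(x) ≤ f(x)` on `[a,∞)` for all `k`, with `f : [a,∞) → [0,1]` decreasing and
`∫_a^∞ f(x)/x dx < ∞`) and Assumption 2 (`F_k(x) ≤ g(x)` on `[0,b]` for all `k`, with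
`g : [0,b] → [0,1]` increasing and `∫_0^b g(x)/x dx < ∞`), one has
`lim_{n→∞} max_{0≤k≤n} |A_k|^{1/n} = 1` almost surely. -/
theorem tendsto_max_abs_rpow_one
    {Ω : Type*} [MeasurableSpace Ω] (μ : Measure Ω) [IsProbabilityMeasure μ]
    (A : ℕ → Ω → ℂ) (hA : ∀ k, Measurable (A k))
    (a : ℝ) (ha : 1 < a) (f : ℝ → ℝ)
    (hf_anti : AntitoneOn f (Set.Ici a))
    (hf_mem : ∀ x ∈ Set.Ici a, f x ∈ Set.Icc (0 : ℝ) 1)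
    (hf_int : IntegrableOn (fun x => f x / x) (Set.Ici a))
    (htail : ∀ k, ∀ x ∈ Set.Ici a,
      1 - (μ {ω | ‖A k ω‖ ≤ x}).toReal ≤ f x)
    (b : ℝ) (hb0 : 0 < b) (hb1 : b < 1) (g : ℝ → ℝ)
    (hg_mono : MonotoneOn g (Set.Icc 0 b))
    (hg_mem : ∀ x ∈ Set.Icc 0 b, g x ∈ Set.Icc (0 : ℝ) 1)
    (hg_int : IntegrableOn (fun x => g x / x) (Set.Ioc 0 b))
    (hsmall : ∀ k, ∀ x ∈ Set.Icc 0 b,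
      (μ {ω | ‖A k ω‖ ≤ x}).toReal ≤ g x) :
    ∀ᵐ ω ∂μ,
      Tendsto
        (fun n : ℕ =>
          ((Finset.range (n + 1)).sup' Finset.nonempty_range_add_one
              fun k => ‖A k ω‖) ^ (1 / (n : ℝ)))
        atTop (nhds 1) :=
  tendsto_max_abs_rpow_one_general μ A hA a ha f hf_int htail b hb0 g hg_int hsmall
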